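/- arXiv:1509.01313 — 3 statements merged into one kernel-verified Lean document; each statement's English description precedes it below -/
import Mathlib

section
/- In a static game with C² utilities on an open convex set U ⊆ ℝ^Q, if the cross second-derivative symmetry ∂²π^i/(∂u^i ∂u^j) = ∂²π^j/(∂u^j ∂u^i) holds for all i, j and all u ∈ U, then there exists a potential function Π : U → ℝ with ∂Π/∂u^i = ∂π^i/∂u^i for all i, so the game is a potential game. -/
open intervalIntegral Set Metric

set_option maxHeartbeats 2000000 in
set_option synthInstance.maxHeartbeats 400000 in
/-- Poincaré lemma for 1-forms on an open convex set in a finite-dimensional space: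
a C¹ form with symmetric derivative has a potential. -/
theorem exists_potential_of_symm {E : Type*} [NormedAddCommGroup E] [NormedSpace ℝ E]
    [FiniteDimensional ℝ E]
    (U : Set E) (hU : IsOpen U) (hUc : Convex ℝ U)
    (ω : E → E →L[ℝ] ℝ) (hω : ContDiffOn ℝ 1 ω U)
    (hsymm : ∀ v ∈ U, ∀ k w, fderiv ℝ ω v k w = fderiv ℝ ω v w k) :
    ∃ P : E → ℝ, ∀ u ∈ U, HasFDerivAt P (ω u) u := by
  rcases U.eq_empty_or_nonempty with h | ⟨u₀, hu₀⟩
  · exact ⟨0, fun u hu => by simp [h] at hu⟩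
  set φ : ℝ → E → E := fun t x => u₀ + t • (x - u₀) with hφdef
  refine ⟨fun x => ∫ t in (0:ℝ)..1, ω (φ t x) (x - u₀), fun u hu => ?_⟩
  set Ω : E → E →L[ℝ] E →L[ℝ] ℝ := fun v => fderiv ℝ ω v with hΩdef
  have hωc : ContinuousOn ω U := hω.continuousOn
  have hΩc : ContinuousOn Ω U := hω.continuousOn_fderiv_of_isOpen hU le_rfl
  have hωd : ∀ v ∈ U, HasFDerivAt ω (Ω v) v := fun v hv =>
    ((hω.differentiableOn one_ne_zero).differentiableAt (hU.mem_nhds hv)).hasFDerivAt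
  -- a closed ball around u inside U
  obtain ⟨δ, δpos, hδ⟩ : ∃ δ > 0, closedBall u δ ⊆ U := by
    rcases Metric.nhds_basis_closedBall.mem_iff.1 (hU.mem_nhds hu) with ⟨δ, δpos, hδ⟩
    exact ⟨δ, δpos, hδ⟩
  have hseg : ∀ t ∈ Icc (0:ℝ) 1, ∀ x ∈ closedBall u δ, φ t x ∈ U := by
    intro t ht x hx
    have h1 : (1 - t) • u₀ + t • x ∈ U :=
      hUc hu₀ (hδ hx) (by linarith [ht.2]) ht.1 (by ring)
    have : φ t x = (1 - t) • u₀ + t • x := by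
      simp only [hφdef]
      module
    rw [this]; exact h1
  -- compact set containing all the segments
  set K : Set E := (fun p : ℝ × E => φ p.1 p.2) '' (Icc (0:ℝ) 1 ×ˢ closedBall u δ) with hKdef
  have hKcomp : IsCompact K := by
    apply (isCompact_Icc.prod (isCompact_closedBall u δ)).image
    fun_prop
  have hKU : K ⊆ U := by
    rintro _ ⟨⟨t, x⟩, ⟨ht, hx⟩, rfl⟩
    exact hseg t ht x hx
  obtain ⟨M₁, hM₁⟩ := hKcomp.exists_bound_of_continuousOn (f := ω) (hωc.mono hKU)
  obtain ⟨M₂, hM₂⟩ := hKcomp.exists_bound_of_continuousOn (f := Ω) (hΩc.mono hKU)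
  -- derivative of the integrand in x
  set F' : E → ℝ → E →L[ℝ] ℝ :=
    fun x t => ω (φ t x) + t • ((Ω (φ t x)).flip (x - u₀)) with hF'def
  have hIoc_sub : Set.uIoc (0:ℝ) 1 ⊆ Icc (0:ℝ) 1 := by
    rw [Set.uIoc_of_le zero_le_one]; exact Ioc_subset_Icc_self
  have hmem : ∀ t ∈ Set.uIoc (0:ℝ) 1, ∀ x ∈ closedBall u δ, φ t x ∈ U :=
    fun t ht x hx => hseg t (hIoc_sub ht) x hx
  have hφcont : ∀ x, Continuous fun t : ℝ => φ t x := by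
    intro x; fun_prop
  have hφcont' : ∀ t, Continuous fun x : E => φ t x := by
    intro t; fun_prop
  have hmapsIcc : ∀ x ∈ closedBall u δ, Set.MapsTo (fun t => φ t x) (Icc (0:ℝ) 1) U :=
    fun x hx t ht => hseg t ht x hx
  -- differentiability of the integrand
  have h_diff : ∀ t ∈ Set.uIoc (0:ℝ) 1, ∀ x ∈ ball u δ,
      HasFDerivAt (fun y => ω (φ t y) (y - u₀)) (F' x t) x := by
    intro t ht x hx
    have hxU : φ t x ∈ U := hmem t ht x (ball_subset_closedBall hx)
    have hφd : HasFDerivAt (fun y => φ t y) (t • ContinuousLinearMap.id ℝ E) x := by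
      have : HasFDerivAt (fun y : E => y - u₀) (ContinuousLinearMap.id ℝ E) x :=
        (hasFDerivAt_id x).sub_const u₀
      exact (this.const_smul t).const_add u₀
    have hcomp : HasFDerivAt (fun y => ω (φ t y)) ((Ω (φ t x)).comp
        (t • ContinuousLinearMap.id ℝ E)) x := (hωd _ hxU).comp x hφd
    have hsub : HasFDerivAt (fun y : E => y - u₀) (ContinuousLinearMap.id ℝ E) x :=
      (hasFDerivAt_id x).sub_const u₀
    have := hcomp.clm_apply hsub
    refine this.congr_fderiv ?_
    ext k
    simp [hF'def, mul_comm]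
  -- bound for F'
  have h_bound : ∀ t ∈ Set.uIoc (0:ℝ) 1, ∀ x ∈ ball u δ,
      ‖F' x t‖ ≤ |M₁| + |M₂| * (δ + ‖u - u₀‖) := by
    intro t ht x hx
    have hxc : x ∈ closedBall u δ := ball_subset_closedBall hx
    have hK : φ t x ∈ K := ⟨(t, x), ⟨hIoc_sub ht, hxc⟩, rfl⟩
    have ht' : |t| ≤ 1 := by
      rw [Set.uIoc_of_le zero_le_one] at ht
      rw [abs_le]; constructor <;> [linarith [ht.1]; exact ht.2]
    have hxn : ‖x - u₀‖ ≤ δ + ‖u - u₀‖ := by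
      calc ‖x - u₀‖ = ‖(x - u) + (u - u₀)‖ := by rw [sub_add_sub_cancel]
        _ ≤ ‖x - u‖ + ‖u - u₀‖ := norm_add_le _ _
        _ ≤ δ + ‖u - u₀‖ := by
            have := mem_closedBall_iff_norm.1 hxc
            linarith
    have h1 : ‖ω (φ t x)‖ ≤ |M₁| := (hM₁ _ hK).trans (le_abs_self _)
    have h2 : ‖Ω (φ t x)‖ ≤ |M₂| := (hM₂ _ hK).trans (le_abs_self _)
    have e1 : ‖t • ((Ω (φ t x)).flip (x - u₀))‖ ≤ |t| * ‖(Ω (φ t x)).flip (x - u₀)‖ := by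
      simpa using ContinuousLinearMap.opNorm_smul_le t ((Ω (φ t x)).flip (x - u₀))
    have e2 : ‖(Ω (φ t x)).flip (x - u₀)‖ ≤ ‖Ω (φ t x)‖ * ‖x - u₀‖ := by
      calc ‖(Ω (φ t x)).flip (x - u₀)‖ ≤ ‖(Ω (φ t x)).flip‖ * ‖x - u₀‖ :=
            ContinuousLinearMap.le_opNorm _ _
        _ = ‖Ω (φ t x)‖ * ‖x - u₀‖ := by rw [ContinuousLinearMap.opNorm_flip]
    have e3 : ‖F' x t‖ ≤ ‖ω (φ t x)‖ + ‖t • ((Ω (φ t x)).flip (x - u₀))‖ := norm_add_le _ _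
    have n1 : (0:ℝ) ≤ ‖x - u₀‖ := norm_nonneg _
    have n2 : (0:ℝ) ≤ ‖Ω (φ t x)‖ := ContinuousLinearMap.opNorm_nonneg _
    have n3 : (0:ℝ) ≤ |t| := abs_nonneg _
    have n4 : (0:ℝ) ≤ |M₂| := abs_nonneg _
    have n5 : (0:ℝ) ≤ ‖(Ω (φ t x)).flip (x - u₀)‖ := ContinuousLinearMap.opNorm_nonneg _
    nlinarith [mul_le_mul h2 hxn n1 n4, mul_le_mul_of_nonneg_left e2 n3,
      mul_le_mul ht' (mul_le_mul h2 hxn n1 n4) (mul_nonneg n2 n1) zero_le_one]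
  -- measurability facts
  have hintcont : ∀ x ∈ closedBall u δ,
      ContinuousOn (fun t => ω (φ t x) (x - u₀)) (Icc (0:ℝ) 1) := by
    intro x hx
    exact ((hωc.comp (hφcont x).continuousOn (hmapsIcc x hx)).clm_apply continuousOn_const)
  have hF_meas : ∀ᶠ x in nhds u, MeasureTheory.AEStronglyMeasurable
      (fun t => ω (φ t x) (x - u₀))
      (MeasureTheory.volume.restrict (Set.uIoc (0:ℝ) 1)) := by
    filter_upwards [hU.mem_nhds hu, closedBall_mem_nhds_of_mem (mem_ball_self δpos)]
      with x _ hx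
    exact ((hintcont x hx).mono hIoc_sub).aestronglyMeasurable measurableSet_uIoc
  have hF_int : IntervalIntegrable (fun t => ω (φ t u) (u - u₀))
      MeasureTheory.volume 0 1 := by
    apply ContinuousOn.intervalIntegrable
    rw [Set.uIcc_of_le zero_le_one]
    exact hintcont u (mem_closedBall_self δpos.le)
  have hΩφcont : ContinuousOn (fun t => Ω (φ t u)) (Icc (0:ℝ) 1) :=
    hΩc.comp (hφcont u).continuousOn (hmapsIcc u (mem_closedBall_self δpos.le))
  have hωφcont : ContinuousOn (fun t => ω (φ t u)) (Icc (0:ℝ) 1) :=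
    hωc.comp (hφcont u).continuousOn (hmapsIcc u (mem_closedBall_self δpos.le))
  have hF'cont : ContinuousOn (fun t => F' u t) (Icc (0:ℝ) 1) := by
    apply hωφcont.add
    apply ContinuousOn.smul continuousOn_id
    have : ContinuousOn (fun t => (Ω (φ t u)).flip) (Icc (0:ℝ) 1) := by
      have hflip : Continuous fun A : E →L[ℝ] E →L[ℝ] ℝ => A.flip :=
        (ContinuousLinearMap.flipₗᵢ ℝ E E ℝ).continuous
      exact hflip.comp_continuousOn hΩφcont
    exact this.clm_apply continuousOn_const
  have hF'_meas : MeasureTheory.AEStronglyMeasurable (F' u)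
      (MeasureTheory.volume.restrict (Set.uIoc (0:ℝ) 1)) :=
    (hF'cont.mono hIoc_sub).aestronglyMeasurable measurableSet_uIoc
  -- differentiate under the integral sign
  have hmain : HasFDerivAt (fun x => ∫ t in (0:ℝ)..1, ω (φ t x) (x - u₀))
      (∫ t in (0:ℝ)..1, F' u t) u := by
    apply intervalIntegral.hasFDerivAt_integral_of_dominated_of_fderiv_le (ball_mem_nhds u δpos) hF_meas hF_int
      hF'_meas
      (MeasureTheory.ae_of_all _ fun t ht x hx => h_bound t ht x hx)
      (intervalIntegrable_const)
      (MeasureTheory.ae_of_all _ fun t ht x hx => h_diff t ht x hx)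
  -- FTC: the integral of F' u equals ω u
  have hF'eq : ∀ t ∈ Icc (0:ℝ) 1, F' u t = ω (φ t u) + t • ((Ω (φ t u)) (u - u₀)) := by
    intro t ht
    have hvU : φ t u ∈ U := hseg t ht u (mem_closedBall_self δpos.le)
    ext k
    simp only [hF'def, ContinuousLinearMap.add_apply, ContinuousLinearMap.smul_apply,
      ContinuousLinearMap.flip_apply]
    rw [hsymm _ hvU k (u - u₀)]
  have hderiv : ∀ t ∈ Set.uIcc (0:ℝ) 1,
      HasDerivAt (fun s : ℝ => s • ω (φ s u)) (F' u t) t := by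
    intro t ht
    rw [Set.uIcc_of_le zero_le_one] at ht
    have hvU : φ t u ∈ U := hseg t ht u (mem_closedBall_self δpos.le)
    have h1 : HasDerivAt (fun s : ℝ => φ s u) (u - u₀) t := by
      have : HasDerivAt (fun s : ℝ => s • (u - u₀)) (u - u₀) t := by
        simpa using (hasDerivAt_id t).smul_const (u - u₀)
      exact this.const_add u₀
    have h2 : HasDerivAt (fun s => ω (φ s u)) (Ω (φ t u) (u - u₀)) t :=
      (hωd _ hvU).comp_hasDerivAt t h1
    have h3 := (hasDerivAt_id' (x := t)).fun_smul h2
    rw [hF'eq t ht]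
    simpa [add_comm] using h3
  have hF'int : IntervalIntegrable (F' u) MeasureTheory.volume 0 1 := by
    apply ContinuousOn.intervalIntegrable
    rw [Set.uIcc_of_le zero_le_one]
    exact hF'cont
  have hFTC : (∫ t in (0:ℝ)..1, F' u t) =
      (1:ℝ) • ω (φ 1 u) - (0:ℝ) • ω (φ 0 u) :=
    intervalIntegral.integral_eq_sub_of_hasDerivAt hderiv hF'int
  have hφ1 : φ 1 u = u := by simp [hφdef]
  rw [hFTC, hφ1] at hmain
  simpa using hmain

set_option maxHeartbeats 1000000 in
/-- If the cross second derivatives of the utilities are symmetric on an open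
convex set, then the game admits a potential function `Π` whose own-action
partial derivatives agree with those of the utilities. -/
theorem static_potential_game_of_second_order_symmetry
    (Q : ℕ) (U : Set (Fin Q → ℝ)) (hU : IsOpen U) (hUc : Convex ℝ U)
    (π : Fin Q → (Fin Q → ℝ) → ℝ)
    (hπ : ∀ i, ContDiffOn ℝ 2 (π i) U)
    (hsym : ∀ i j : Fin Q, ∀ u ∈ U,
      fderiv ℝ (fun v => fderiv ℝ (π i) v (Pi.single i 1)) u (Pi.single j 1) =
      fderiv ℝ (fun v => fderiv ℝ (π j) v (Pi.single j 1)) u (Pi.single i 1)) :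
    ∃ Pot : (Fin Q → ℝ) → ℝ, ∀ i : Fin Q, ∀ u ∈ U,
      fderiv ℝ Pot u (Pi.single i 1) = fderiv ℝ (π i) u (Pi.single i 1) := by
  classical
  set c : Fin Q → (Fin Q → ℝ) → ℝ :=
    fun j v => fderiv ℝ (π j) v (Pi.single j 1) with hcdef
  set ω : (Fin Q → ℝ) → (Fin Q → ℝ) →L[ℝ] ℝ :=
    fun v => ∑ j, (c j v) • ContinuousLinearMap.proj j with hωdef
  have hc : ∀ j, ContDiffOn ℝ 1 (c j) U := fun j =>
    (((hπ j).fderiv_of_isOpen hU (by norm_num)).clm_apply contDiffOn_const)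
  have hω : ContDiffOn ℝ 1 ω U :=
    ContDiffOn.sum fun j _ => (hc j).smul contDiffOn_const
  have hcd : ∀ j, ∀ v ∈ U, HasFDerivAt (c j) (fderiv ℝ (c j) v) v := fun j v hv =>
    (((hc j).differentiableOn one_ne_zero).differentiableAt (hU.mem_nhds hv)).hasFDerivAt
  have hΩ : ∀ v ∈ U, fderiv ℝ ω v =
      ∑ j, (fderiv ℝ (c j) v).smulRight (ContinuousLinearMap.proj j) := by
    intro v hv
    exact (HasFDerivAt.fun_sum fun j _ => (hcd j v hv).smul_const
      (ContinuousLinearMap.proj j : (Fin Q → ℝ) →L[ℝ] ℝ)).fderiv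
  have hsymm : ∀ v ∈ U, ∀ k w, fderiv ℝ ω v k w = fderiv ℝ ω v w k := by
    intro v hv k w
    rw [hΩ v hv]
    simp only [ContinuousLinearMap.coe_sum', Finset.sum_apply,
      ContinuousLinearMap.smulRight_apply, ContinuousLinearMap.proj_apply,
      smul_eq_mul]
    have hexp : ∀ (k : Fin Q → ℝ) j, fderiv ℝ (c j) v k =
        ∑ l, k l * fderiv ℝ (c j) v (Pi.single l 1) := by
      intro k j
      have hbasis : k = ∑ l, k l • (Pi.single l 1 : Fin Q → ℝ) := by
        ext m
        simp [Pi.single_apply]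
      conv_lhs => rw [hbasis]
      rw [map_sum]
      simp [smul_eq_mul]
    simp_rw [hexp k, hexp w]
    have hD : ∀ j l, fderiv ℝ (c j) v (Pi.single l 1) =
        fderiv ℝ (c l) v (Pi.single j 1) := fun j l => hsym j l v hv
    simp only [ContinuousLinearMap.smul_apply, ContinuousLinearMap.proj_apply, smul_eq_mul]
    simp_rw [Finset.sum_mul]
    rw [Finset.sum_comm]
    refine Finset.sum_congr rfl fun a _ => Finset.sum_congr rfl fun b _ => ?_
    rw [hD b a]
    ring
  obtain ⟨P, hP⟩ := exists_potential_of_symm U hU hUc ω hω hsymm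
  refine ⟨P, fun i u hu => ?_⟩
  rw [(hP u hu).fderiv]
  simp only [hωdef, ContinuousLinearMap.coe_sum', Finset.sum_apply,
    ContinuousLinearMap.smul_apply, ContinuousLinearMap.proj_apply,
    Pi.single_apply, smul_eq_mul, mul_ite, mul_one, mul_zero]
  simp [hcdef]
end

section
/- Define Π(x, u) = log(1 + ∑_{i=1}^Q |h^i|² u^i) + α ∑_{i=1}^Q x^i on the set where all u^i > −(something ensuring positivity), e.g., u^i ≥ 0. Then for each player i, ∂Π/∂u^i = |h^i|² / (1 + ∑_p |h^p|² u^p) = ∂π^i/∂u^i and ∂Π/∂x^i = α = ∂π^i/∂x^i, where π^i(x^i, u) = log(1 + |h^i|² u^i / (1 + ∑_{j≠i} |h^j|² u^j)) + α x^i. Hence Π is an exact potential for the multiple-access channel game. -/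
/-- The function `Π(x,u) = log(1 + ∑ c_i u_i) + α ∑ x_i` is an exact potential
for the multiple-access channel game: its own-action and own-state partial
derivatives agree with those of each player's utility. -/
theorem mac_exact_potential
    (Q : ℕ) (c : Fin Q → ℝ) (hc : ∀ i, 0 < c i) (α : ℝ) (hα : 0 < α)
    (π : Fin Q → ((Fin Q → ℝ) × (Fin Q → ℝ)) → ℝ)
    (hπ : ∀ i p, π i p =
      Real.log (1 + c i * p.2 i / (1 + ∑ j ∈ Finset.univ.erase i, c j * p.2 j))
        + α * p.1 i)
    (Pot : ((Fin Q → ℝ) × (Fin Q → ℝ)) → ℝ)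
    (hPot : ∀ p, Pot p = Real.log (1 + ∑ i : Fin Q, c i * p.2 i) + α * ∑ i : Fin Q, p.1 i) :
    ∀ i : Fin Q, ∀ x u : Fin Q → ℝ, (∀ k, 0 ≤ u k) →
      (fderiv ℝ Pot (x, u) ((0 : Fin Q → ℝ), Pi.single i 1) =
          c i / (1 + ∑ p : Fin Q, c p * u p) ∧
        fderiv ℝ (π i) (x, u) ((0 : Fin Q → ℝ), Pi.single i 1) =
          c i / (1 + ∑ p : Fin Q, c p * u p)) ∧
      (fderiv ℝ Pot (x, u) (Pi.single i 1, (0 : Fin Q → ℝ)) = α ∧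
        fderiv ℝ (π i) (x, u) (Pi.single i 1, (0 : Fin Q → ℝ)) = α) := by
  classical
  intro i x u hu
  have : True := trivial
  -- linear maps
  let T : (Fin Q → ℝ) →L[ℝ] ℝ :=
    ∑ j : Fin Q, c j • ContinuousLinearMap.proj (R := ℝ) (φ := fun _ : Fin Q => ℝ) j
  let B : (Fin Q → ℝ) →L[ℝ] ℝ :=
    ∑ j ∈ Finset.univ.erase i, c j • ContinuousLinearMap.proj (R := ℝ) (φ := fun _ : Fin Q => ℝ) j
  let S : (Fin Q → ℝ) →L[ℝ] ℝ :=
    ∑ j : Fin Q, ContinuousLinearMap.proj (R := ℝ) (φ := fun _ : Fin Q => ℝ) j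
  have hT : ∀ v, T v = ∑ j : Fin Q, c j * v j := by
    intro v; simp [T]
  have hB : ∀ v, B v = ∑ j ∈ Finset.univ.erase i, c j * v j := by
    intro v; simp [B]
  have hS : ∀ v, S v = ∑ j : Fin Q, v j := by
    intro v; simp [S]
  have hTu : (0:ℝ) < 1 + T u := by
    rw [hT]
    have : (0:ℝ) ≤ ∑ j : Fin Q, c j * u j :=
      Finset.sum_nonneg fun j _ => mul_nonneg (hc j).le (hu j)
    linarith
  have hBu : (0:ℝ) < 1 + B u := by
    rw [hB]
    have : (0:ℝ) ≤ ∑ j ∈ Finset.univ.erase i, c j * u j :=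
      Finset.sum_nonneg fun j _ => mul_nonneg (hc j).le (hu j)
    linarith
  have hsingleT : T (Pi.single i 1) = c i := by
    rw [hT]
    simp [Pi.single_apply, mul_ite]
  have hsingleB : B (Pi.single i 1) = 0 := by
    rw [hB]
    apply Finset.sum_eq_zero
    intro j hj
    rcases Finset.mem_erase.mp hj with ⟨hji, _⟩
    simp [Pi.single_apply, hji]
  have hsingleS : S (Pi.single i 1) = 1 := by
    rw [hS]; simp [Pi.single_apply]
  let fst : ((Fin Q → ℝ) × (Fin Q → ℝ)) →L[ℝ] (Fin Q → ℝ) := ContinuousLinearMap.fst ℝ _ _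
  let snd : ((Fin Q → ℝ) × (Fin Q → ℝ)) →L[ℝ] (Fin Q → ℝ) := ContinuousLinearMap.snd ℝ _ _
  -- derivatives of log terms
  have hTlin : HasFDerivAt (fun p : ((Fin Q → ℝ) × (Fin Q → ℝ)) => 1 + T p.2) (T.comp snd) (x, u) :=
    ((T.comp snd).hasFDerivAt (x := (x, u))).const_add 1
  have hBlin : HasFDerivAt (fun p : ((Fin Q → ℝ) × (Fin Q → ℝ)) => 1 + B p.2) (B.comp snd) (x, u) :=
    ((B.comp snd).hasFDerivAt (x := (x, u))).const_add 1
  have hlogT : HasFDerivAt (fun p : ((Fin Q → ℝ) × (Fin Q → ℝ)) => Real.log (1 + T p.2))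
      ((1 + T u)⁻¹ • (T.comp snd)) (x, u) := hTlin.log (ne_of_gt hTu)
  have hlogB : HasFDerivAt (fun p : ((Fin Q → ℝ) × (Fin Q → ℝ)) => Real.log (1 + B p.2))
      ((1 + B u)⁻¹ • (B.comp snd)) (x, u) := hBlin.log (ne_of_gt hBu)
  have hSlin : HasFDerivAt (fun p : ((Fin Q → ℝ) × (Fin Q → ℝ)) => α * S p.1) (α • (S.comp fst)) (x, u) := by
    have := (α • (S.comp fst)).hasFDerivAt (x := (x, u))
    convert this using 1
    funext p; rfl
  have hproj : HasFDerivAt (fun p : ((Fin Q → ℝ) × (Fin Q → ℝ)) => α * p.1 i)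
      (α • ((ContinuousLinearMap.proj (R := ℝ) (φ := fun _ : Fin Q => ℝ) i).comp fst)) (x, u) := by
    have := (α • ((ContinuousLinearMap.proj (R := ℝ) (φ := fun _ : Fin Q => ℝ) i).comp fst)).hasFDerivAt
      (x := (x, u))
    convert this using 1
    funext p; rfl
  -- Pot derivative
  have hPotEq : Pot = fun p : ((Fin Q → ℝ) × (Fin Q → ℝ)) => Real.log (1 + T p.2) + α * S p.1 := by
    funext p; rw [hPot p, hT, hS]
  have hPotD : HasFDerivAt Pot ((1 + T u)⁻¹ • (T.comp snd) + α • (S.comp fst)) (x, u) := by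
    rw [hPotEq]; exact hlogT.add hSlin
  have hPotF := hPotD.fderiv
  -- π i derivative via eventual equality
  let g : ((Fin Q → ℝ) × (Fin Q → ℝ)) → ℝ := fun p => Real.log (1 + T p.2) - Real.log (1 + B p.2) + α * p.1 i
  have hgD : HasFDerivAt g
      (((1 + T u)⁻¹ • (T.comp snd) - (1 + B u)⁻¹ • (B.comp snd)) +
        α • ((ContinuousLinearMap.proj (R := ℝ) (φ := fun _ : Fin Q => ℝ) i).comp fst)) (x, u) :=
    (hlogT.sub hlogB).add hproj
  have hevT : ∀ᶠ p : ((Fin Q → ℝ) × (Fin Q → ℝ)) in nhds (x, u), 0 < 1 + T p.2 := by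
    have hcont : ContinuousAt (fun p : ((Fin Q → ℝ) × (Fin Q → ℝ)) => 1 + T p.2) (x, u) :=
      (continuous_const.add (T.continuous.comp continuous_snd)).continuousAt
    exact continuousAt_const.eventually_lt hcont hTu
  have hevB : ∀ᶠ p : ((Fin Q → ℝ) × (Fin Q → ℝ)) in nhds (x, u), 0 < 1 + B p.2 := by
    have hcont : ContinuousAt (fun p : ((Fin Q → ℝ) × (Fin Q → ℝ)) => 1 + B p.2) (x, u) :=
      (continuous_const.add (B.continuous.comp continuous_snd)).continuousAt
    exact continuousAt_const.eventually_lt hcont hBu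
  have hev : π i =ᶠ[nhds ((x, u) : ((Fin Q → ℝ) × (Fin Q → ℝ)))] g := by
    filter_upwards [hevT, hevB] with p hpT hpB
    have hBne : (1 + B p.2) ≠ 0 := ne_of_gt hpB
    have hsplit : (1 : ℝ) + T p.2 = (1 + B p.2) + c i * p.2 i := by
      rw [hT, hB, ← Finset.add_sum_erase Finset.univ (fun j => c j * p.2 j) (Finset.mem_univ i)]
      ring
    have harg : 1 + c i * p.2 i / (1 + B p.2) = (1 + T p.2) / (1 + B p.2) := by
      rw [hsplit]; field_simp
    rw [hπ i p, ← hB p.2, harg, Real.log_div (ne_of_gt hpT) hBne]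
  have hπF : fderiv ℝ (π i) (x, u) = fderiv ℝ g (x, u) := hev.fderiv_eq
  have hgF := hgD.fderiv
  have hsum : (1 + ∑ p : Fin Q, c p * u p) = 1 + T u := by rw [hT]
  refine ⟨⟨?_, ?_⟩, ?_, ?_⟩
  · rw [hPotF]
    simp only [ContinuousLinearMap.add_apply, ContinuousLinearMap.smul_apply,
      ContinuousLinearMap.comp_apply, ContinuousLinearMap.coe_snd', ContinuousLinearMap.coe_fst']
    rw [hsum]
    have h1 : snd ((0 : Fin Q → ℝ), Pi.single i 1) = Pi.single i 1 := rfl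
    have h2 : fst ((0 : Fin Q → ℝ), Pi.single i 1) = 0 := rfl
    rw [h1, h2, hsingleT, map_zero]
    simp [div_eq_inv_mul]
  · rw [hπF, hgF]
    simp only [ContinuousLinearMap.add_apply, ContinuousLinearMap.sub_apply,
      ContinuousLinearMap.smul_apply, ContinuousLinearMap.comp_apply]
    have h1 : snd ((0 : Fin Q → ℝ), Pi.single i 1) = Pi.single i 1 := rfl
    have h2 : fst ((0 : Fin Q → ℝ), Pi.single i 1) = 0 := rfl
    rw [h1, h2, hsingleT, hsingleB, map_zero, hsum]
    simp [div_eq_inv_mul]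
  · rw [hPotF]
    simp only [ContinuousLinearMap.add_apply, ContinuousLinearMap.smul_apply,
      ContinuousLinearMap.comp_apply]
    have h1 : snd (Pi.single i 1, (0 : Fin Q → ℝ)) = 0 := rfl
    have h2 : fst (Pi.single i 1, (0 : Fin Q → ℝ)) = Pi.single i 1 := rfl
    rw [h1, h2, map_zero, hsingleS]
    simp
  · rw [hπF, hgF]
    simp only [ContinuousLinearMap.add_apply, ContinuousLinearMap.sub_apply,
      ContinuousLinearMap.smul_apply, ContinuousLinearMap.comp_apply]
    have h1 : snd (Pi.single i 1, (0 : Fin Q → ℝ)) = 0 := rfl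
    have h2 : fst (Pi.single i 1, (0 : Fin Q → ℝ)) = Pi.single i 1 := rfl
    rw [h1, h2, map_zero]
    simp [Pi.single_apply]
end

section
/- In the equal-rate scheduling game with utilities π^i(x, u, t) = (1−α) R^i_t − α ∑_{j≠i} (x^i − x^j)², where R^i_t = log(1 + |h^i_t|² u^i / (1 + ∑_{j≠i} |h^j_t|² u^j)), the function Π(x, u, t) = (1−α) log(1 + ∑_{i=1}^Q |h^i_t|² u^i) − α ∑_{i=1}^{Q−1} ∑_{j=i+1}^Q (x^i − x^j)² satisfies ∂Π/∂u^i = ∂π^i/∂u^i and ∂Π/∂x^i = ∂π^i/∂x^i for every player i; hence Π is an exact potential for the game. -/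
open Finset

lemma pair_sum_erase {Q : ℕ} (i : Fin Q) (G : Fin Q → Fin Q → ℝ)
    (hsymm : ∀ a b, G a b = G b a)
    (hz : ∀ a b, a ≠ i → b ≠ i → G a b = 0) :
    ∑ a : Fin Q, ∑ b ∈ univ.filter (fun b => a < b), G a b
      = ∑ j ∈ univ.erase i, G i j := by
  have h1 : ∀ a : Fin Q, a ≠ i →
      ∑ b ∈ univ.filter (fun b => a < b), G a b = if a < i then G i a else 0 := by
    intro a ha
    have : ∀ b ∈ univ.filter (fun b => a < b), G a b = if b = i then G i a else 0 := by
      intro b _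
      by_cases hb : b = i
      · simp [hb, hsymm a i]
      · simp [hb, hz a b ha hb]
    rw [Finset.sum_congr rfl this, Finset.sum_ite_eq']
    simp [Finset.mem_filter]
  rw [← Finset.add_sum_erase _ _ (Finset.mem_univ i)]
  rw [Finset.sum_congr rfl (fun a ha => h1 a (Finset.ne_of_mem_erase ha))]
  have h2 : ∑ a ∈ univ.erase i, (if a < i then G i a else 0)
      = ∑ a ∈ univ, (if a < i then G i a else 0) := by
    rw [← Finset.add_sum_erase _ _ (Finset.mem_univ i)]
    simp
  rw [h2, ← Finset.sum_filter]
  have h3 : univ.erase i = (univ.filter (fun b => i < b)) ∪ (univ.filter (fun b => b < i)) := by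
    ext b
    simp only [Finset.mem_erase, Finset.mem_union, Finset.mem_filter, Finset.mem_univ,
      true_and, and_true]
    constructor
    · intro hb; exact (Ne.lt_or_gt hb).symm
    · rintro (h | h)
      · exact h.ne'
      · exact h.ne
  rw [h3, Finset.sum_union]
  rw [Finset.disjoint_left]
  intro b hb1 hb2
  simp only [Finset.mem_filter] at hb1 hb2
  exact absurd (lt_trans hb1.2 hb2.2) (lt_irrefl i)

set_option maxHeartbeats 1000000 in
/-- The equal-rate scheduling game admits the exact potential
`Π(x,u) = (1−α) log(1 + ∑ c_i u_i) − α ∑_{i<j} (x_i − x_j)²`: its own-action and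
own-state partial derivatives agree with those of each player's utility. -/
theorem equal_rate_exact_potential
    (Q : ℕ) (c : Fin Q → ℝ) (hc : ∀ i, 0 < c i) (α : ℝ) (hα0 : 0 < α) (hα1 : α < 1)
    (π : Fin Q → ((Fin Q → ℝ) × (Fin Q → ℝ)) → ℝ)
    (hπ : ∀ i p, π i p =
      (1 - α) * Real.log (1 + c i * p.2 i / (1 + ∑ j ∈ Finset.univ.erase i, c j * p.2 j))
        - α * ∑ j ∈ Finset.univ.erase i, (p.1 i - p.1 j) ^ 2)
    (Pot : ((Fin Q → ℝ) × (Fin Q → ℝ)) → ℝ)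
    (hPot : ∀ p, Pot p =
      (1 - α) * Real.log (1 + ∑ i : Fin Q, c i * p.2 i)
        - α * ∑ i : Fin Q, ∑ j ∈ Finset.univ.filter (fun j => i < j), (p.1 i - p.1 j) ^ 2) :
    ∀ i : Fin Q, ∀ x u : Fin Q → ℝ, (∀ k, 0 ≤ u k) →
      fderiv ℝ Pot (x, u) ((0 : Fin Q → ℝ), Pi.single i 1) =
        fderiv ℝ (π i) (x, u) ((0 : Fin Q → ℝ), Pi.single i 1) ∧
      fderiv ℝ Pot (x, u) (Pi.single i 1, (0 : Fin Q → ℝ)) =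
        fderiv ℝ (π i) (x, u) (Pi.single i 1, (0 : Fin Q → ℝ)) := by
  intro i x u hu
  set D : ℝ := 1 + ∑ j ∈ univ.erase i, c j * u j with hDdef
  set A : ℝ := 1 + ∑ j : Fin Q, c j * u j with hAdef
  have hD : 0 < D := by
    have : 0 ≤ ∑ j ∈ univ.erase i, c j * u j :=
      Finset.sum_nonneg fun j _ => mul_nonneg (hc j).le (hu j)
    linarith
  have hA : 0 < A := by
    have : 0 ≤ ∑ j : Fin Q, c j * u j :=
      Finset.sum_nonneg fun j _ => mul_nonneg (hc j).le (hu j)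
    linarith
  have hAD : A = D + c i * u i := by
    rw [hAdef, hDdef, ← Finset.add_sum_erase _ _ (Finset.mem_univ i)]
    ring
  have hargpos : (0:ℝ) < 1 + c i * u i / D := by
    have : 0 ≤ c i * u i / D := div_nonneg (mul_nonneg (hc i).le (hu i)) hD.le
    linarith
  have hPotDiff : DifferentiableAt ℝ Pot (x, u) := by
    rw [funext hPot]
    apply DifferentiableAt.sub
    · apply DifferentiableAt.const_mul
      apply DifferentiableAt.log
      · fun_prop
      · exact hA.ne'
    · fun_prop
  have hπDiff : DifferentiableAt ℝ (π i) (x, u) := by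
    rw [funext (hπ i)]
    apply DifferentiableAt.sub
    · apply DifferentiableAt.const_mul
      apply DifferentiableAt.log
      · have h1 : DifferentiableAt ℝ
            (fun p : (Fin Q → ℝ) × (Fin Q → ℝ) => c i * p.2 i) (x, u) := by fun_prop
        have h2 : DifferentiableAt ℝ
            (fun p : (Fin Q → ℝ) × (Fin Q → ℝ) =>
              1 + ∑ j ∈ univ.erase i, c j * p.2 j) (x, u) := by fun_prop
        have hinv : DifferentiableAt ℝ
            (fun p : (Fin Q → ℝ) × (Fin Q → ℝ) =>
              (1 + ∑ j ∈ univ.erase i, c j * p.2 j)⁻¹) (x, u) :=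
          h2.inv (show (1 + ∑ j ∈ univ.erase i, c j * u j) ≠ 0 from hDdef ▸ hD.ne')
        have hdiv : DifferentiableAt ℝ
            (fun p : (Fin Q → ℝ) × (Fin Q → ℝ) =>
              1 + c i * p.2 i * (1 + ∑ j ∈ univ.erase i, c j * p.2 j)⁻¹) (x, u) :=
          (h1.mul hinv).const_add 1
        simpa [div_eq_mul_inv] using hdiv
      · exact hargpos.ne'
    · fun_prop
  have hdd : ∀ (f : (Fin Q → ℝ) × (Fin Q → ℝ) → ℝ), DifferentiableAt ℝ f (x, u) →
      ∀ v : (Fin Q → ℝ) × (Fin Q → ℝ),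
      HasDerivAt (fun t : ℝ => f ((x, u) + t • v)) (fderiv ℝ f (x, u) v) 0 := by
    intro f hf v
    have hline : HasDerivAt (fun t : ℝ => (x, u) + t • v) v 0 := by
      have h := ((hasDerivAt_id (0:ℝ)).smul_const v).const_add (x, u)
      simpa using h
    have h0 : ((x, u) : (Fin Q → ℝ) × (Fin Q → ℝ)) = (x, u) + (0:ℝ) • v := by simp
    have := HasFDerivAt.comp_hasDerivAt 0 (h0 ▸ hf.hasFDerivAt) hline
    rw [zero_smul, add_zero] at this
    exact this
  have key : ∀ (v : (Fin Q → ℝ) × (Fin Q → ℝ)) (C : ℝ),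
      (∀ᶠ t in nhds (0:ℝ), Pot ((x, u) + t • v) = π i ((x, u) + t • v) + C) →
      fderiv ℝ Pot (x, u) v = fderiv ℝ (π i) (x, u) v := by
    intro v C hC
    have hP := hdd Pot hPotDiff v
    have hq := hdd (π i) hπDiff v
    have h2 : HasDerivAt (fun t : ℝ => Pot ((x, u) + t • v))
        (fderiv ℝ (π i) (x, u) v) 0 :=
      (hq.add_const C).congr_of_eventuallyEq hC
    exact hP.unique h2
  set v₁ : (Fin Q → ℝ) × (Fin Q → ℝ) := ((0 : Fin Q → ℝ), Pi.single i 1) with hv₁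
  set v₂ : (Fin Q → ℝ) × (Fin Q → ℝ) := (Pi.single i 1, (0 : Fin Q → ℝ)) with hv₂
  constructor
  · -- direction (0, e_i)
    apply key v₁ ((1 - α) * Real.log D
      - α * (∑ a : Fin Q, ∑ b ∈ univ.filter (fun b => a < b), (x a - x b) ^ 2)
      + α * (∑ j ∈ univ.erase i, (x i - x j) ^ 2))
    have hTend : Filter.Tendsto (fun t : ℝ => A + c i * t) (nhds 0) (nhds A) := by
      have : Continuous fun t : ℝ => A + c i * t := by continuity
      simpa using this.tendsto 0
    filter_upwards [hTend.eventually (eventually_gt_nhds hA)] with t ht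
    have h2nd : ∀ j, ((x, u) + t • v₁).2 j = u j + t * (if j = i then (1:ℝ) else 0) := by
      intro j; simp [hv₁, Pi.single_apply]
    have hsum_u : ∑ j : Fin Q, c j * ((x, u) + t • v₁).2 j = (∑ j : Fin Q, c j * u j) + c i * t := by
      calc ∑ j : Fin Q, c j * ((x, u) + t • v₁).2 j
          = ∑ j : Fin Q, (c j * u j + (if j = i then c i * t else 0)) := by
            refine Finset.sum_congr rfl fun j _ => ?_
            rw [h2nd j]
            by_cases h : j = i
            · subst h; simp; ring
            · simp [h]
        _ = (∑ j : Fin Q, c j * u j) + c i * t := by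
            rw [Finset.sum_add_distrib, Finset.sum_ite_eq' univ i fun _ => c i * t]
            simp
    have herase_u : ∑ j ∈ univ.erase i, c j * ((x, u) + t • v₁).2 j
        = ∑ j ∈ univ.erase i, c j * u j := by
      refine Finset.sum_congr rfl fun j hj => ?_
      have hji : j ≠ i := Finset.ne_of_mem_erase hj
      rw [h2nd j]
      simp [hji]
    have hui : ((x, u) + t • v₁).2 i = u i + t := by
      rw [h2nd i]; simp
    have hx1 : ((x, u) + t • v₁).1 = x := by simp [hv₁]
    rw [hPot, hπ, hsum_u, herase_u, hui, hx1, ← hDdef]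
    have hAc : 1 + ((∑ j : Fin Q, c j * u j) + c i * t) = A + c i * t := by
      rw [hAdef]; ring
    rw [hAc]
    have hfrac : 1 + c i * (u i + t) / D = (A + c i * t) / D := by
      rw [hAD]
      field_simp
      ring
    rw [hfrac, Real.log_div ht.ne' hD.ne']
    ring
  · -- direction (e_i, 0)
    apply key v₂ ((1 - α) * Real.log A - (1 - α) * Real.log (1 + c i * u i / D)
      - α * (∑ a : Fin Q, ∑ b ∈ univ.filter (fun b => a < b), (x a - x b) ^ 2)
      + α * (∑ j ∈ univ.erase i, (x i - x j) ^ 2))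
    apply Filter.Eventually.of_forall
    intro t
    set y : Fin Q → ℝ := x + t • (Pi.single i 1 : Fin Q → ℝ) with hy
    have hx1 : ((x, u) + t • v₂).1 = y := by simp [hv₂, hy]
    have hu2 : ((x, u) + t • v₂).2 = u := by simp [hv₂]
    rw [hPot, hπ, hx1, hu2, ← hDdef, ← hAdef]
    have hpair : ∑ a : Fin Q, ∑ b ∈ univ.filter (fun b => a < b), (y a - y b) ^ 2
        - ∑ a : Fin Q, ∑ b ∈ univ.filter (fun b => a < b), (x a - x b) ^ 2
        = ∑ j ∈ univ.erase i, (y i - y j) ^ 2 - ∑ j ∈ univ.erase i, (x i - x j) ^ 2 := by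
      have := pair_sum_erase i (fun a b => (y a - y b) ^ 2 - (x a - x b) ^ 2)
        (by intro a b; ring)
        (by
          intro a b ha hb
          have hya : y a = x a := by simp [hy, Pi.single_apply, ha]
          have hyb : y b = x b := by simp [hy, Pi.single_apply, hb]
          simp [hya, hyb])
      simpa [Finset.sum_sub_distrib] using this
    linear_combination (-α) * hpair
end
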